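/- arXiv:1912.13008 — 8 statements merged into one kernel-verified Lean document; each statement's English description precedes it below -/
import Mathlib

section
/- Let X, Y be nonempty compact subsets of ℝ and let C be a correspondence between them with distortion D. If no two edges of C cross (i.e., there are no pairs (x1,y1),(x2,y2) ∈ C with x1 < x2 and y1 > y2, or x1 > x2 and y1 < y2), and if (min X, y1) ∈ C with min X = y1 and (max X, y2) ∈ C with y1 ≤ y2, then the Hausdorff distance d_H(X,Y) ≤ D. -/
/-!
Since `min X = y1`, the edge `(y1, y1)` lies on the diagonal. An edge `(x, y)` that does not cross
it has `x` and `y` weakly on the same side of `y1`, so `|x - y| = ||x - y1| - |y - y1||` is at most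
the distortion. Every point of `X` is thus within `D` of its partner in `Y` and vice versa.
-/

/-- A correspondence between subsets `X` and `Y` of `ℝ`. -/
def IsCorrOn (X Y : Set ℝ) (C : Set (ℝ × ℝ)) : Prop :=
  C ⊆ X ×ˢ Y ∧ (∀ x ∈ X, ∃ y, (x, y) ∈ C) ∧ (∀ y ∈ Y, ∃ x, (x, y) ∈ C)

theorem abs_sub_eq_abs_abs_sub_abs_sub_of_not_separated {α : Type*} [AddCommGroup α]
    [LinearOrder α] [IsOrderedAddMonoid α] {a b c : α} (h₁ : ¬(a < b ∧ c < a))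
    (h₂ : ¬(b < a ∧ a < c)) : |b - c| = |(|b - a| - |c - a|)| := by
  rw [not_and_or, not_lt, not_lt] at h₁ h₂
  rcases le_total a b with hb | hb <;> rcases le_total a c with hc | hc
  · rw [abs_of_nonneg (sub_nonneg.2 hb), abs_of_nonneg (sub_nonneg.2 hc), sub_sub_sub_cancel_right]
  · obtain rfl | rfl : b = a ∨ c = a := h₁.imp (le_antisymm · hb) (le_antisymm hc ·)
    · simp [abs_sub_comm]
    · simp
  · obtain rfl | rfl : b = a ∨ c = a := h₂.imp (le_antisymm hb ·) (le_antisymm · hc)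
    · simp [abs_sub_comm]
    · simp
  · rw [abs_of_nonpos (sub_nonpos.2 hb), abs_of_nonpos (sub_nonpos.2 hc), neg_sub_neg,
      abs_sub_comm, sub_sub_sub_cancel_right]

theorem abs_sub_le_of_no_crossing_with_diag {C : Set (ℝ × ℝ)} {D a : ℝ} (ha : (a, a) ∈ C)
    (hD : ∀ p ∈ C, ∀ q ∈ C, |(|p.1 - q.1| - |p.2 - q.2|)| ≤ D)
    (hnc : ∀ p ∈ C, ∀ q ∈ C, ¬(p.1 < q.1 ∧ p.2 > q.2) ∧ ¬(p.1 > q.1 ∧ p.2 < q.2))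
    {p : ℝ × ℝ} (hp : p ∈ C) : |p.1 - p.2| ≤ D := by
  obtain ⟨h₁, h₂⟩ := hnc _ ha _ hp
  rw [abs_sub_eq_abs_abs_sub_abs_sub_of_not_separated h₁ h₂]
  exact hD _ hp _ ha

theorem IsCorrOn.hausdorffDist_le {X Y : Set ℝ} {C : Set (ℝ × ℝ)} {D : ℝ} (hC : IsCorrOn X Y C)
    (hD₀ : 0 ≤ D) (hD : ∀ p ∈ C, |p.1 - p.2| ≤ D) : Metric.hausdorffDist X Y ≤ D := by
  obtain ⟨hCXY, hCX, hCY⟩ := hC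
  refine Metric.hausdorffDist_le_of_mem_dist hD₀ (fun x hx => ?_) (fun y hy => ?_)
  · obtain ⟨y, hxy⟩ := hCX x hx
    exact ⟨y, (hCXY hxy).2, hD _ hxy⟩
  · obtain ⟨x, hxy⟩ := hCY y hy
    exact ⟨x, (hCXY hxy).1, dist_comm y x ▸ hD _ hxy⟩

theorem hausdorffDist_le_of_no_crossing_general (X Y : Set ℝ) (C : Set (ℝ × ℝ)) (D : ℝ)
    (hC : IsCorrOn X Y C)
    (hD : ∀ p ∈ C, ∀ q ∈ C, abs (|p.1 - q.1| - |p.2 - q.2|) ≤ D)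
    (hnc : ∀ p ∈ C, ∀ q ∈ C, ¬(p.1 < q.1 ∧ p.2 > q.2) ∧ ¬(p.1 > q.1 ∧ p.2 < q.2))
    (y1 : ℝ) (h1 : (sInf X, y1) ∈ C) (h1' : sInf X = y1) :
    Metric.hausdorffDist X Y ≤ D := by
  have hdiag : (y1, y1) ∈ C := h1' ▸ h1
  have hCD := fun p (hp : p ∈ C) => abs_sub_le_of_no_crossing_with_diag hdiag hD hnc hp
  exact hC.hausdorffDist_le (by simpa using hCD _ hdiag) hCD

theorem hausdorffDist_le_of_no_crossing (X Y : Set ℝ) (C : Set (ℝ × ℝ)) (D : ℝ)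
    (hX : IsCompact X) (hXn : X.Nonempty) (hY : IsCompact Y) (hYn : Y.Nonempty)
    (hC : IsCorrOn X Y C)
    (hD : ∀ p ∈ C, ∀ q ∈ C, abs (|p.1 - q.1| - |p.2 - q.2|) ≤ D)
    (hnc : ∀ p ∈ C, ∀ q ∈ C, ¬(p.1 < q.1 ∧ p.2 > q.2) ∧ ¬(p.1 > q.1 ∧ p.2 < q.2))
    (y1 y2 : ℝ) (h1 : (sInf X, y1) ∈ C) (h1' : sInf X = y1)
    (h2 : (sSup X, y2) ∈ C) (h12 : y1 ≤ y2) :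
    Metric.hausdorffDist X Y ≤ D :=
  hausdorffDist_le_of_no_crossing_general X Y C D hC hD hnc y1 h1 h1'
end

section
/- For any two nonempty compact subsets X, Y of ℝ, d_{H,iso}(X,Y) ≤ 2·d_GH(X,Y), where d_{H,iso}(X,Y) is the infimum over all isometries T of ℝ (translations and reflections) of the Hausdorff distance d_H(X, T(Y)). -/
/-!
Since `2 d_GH(X, Y)` is the infimum of the distortions of correspondences between `X` and `Y`,
it suffices, given a correspondence `R` of distortion at most `r`, to move `Y` by an isometry of
`ℝ` to Hausdorff distance `≤ r` from `X`. Swapping `X` and `Y` we may assume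
`diam Y ≤ diam X = b - a`, where `a = min X` and `b = max X`, and reflecting `Y` we may assume
that the partners `p` of `a` and `q` of `b` satisfy `p ≤ q`. Translate `Y` so that the midpoint
of `[p, q]` lands on the midpoint of `[a, b]`. A point `x` with partner `y` is then within `r`
of the translate of `y` clamped to `[p, q]`, while a point of `Y` beyond `q` (or below `p`) lands
within `(b - a) - (q - p) ≤ r` of `b` (or `a`), because `diam Y ≤ b - a`.
-/

/-- Gromov-Hausdorff distance between nonempty compact subsets of a metric space. -/
noncomputable def ghDistSet {E : Type*} [MetricSpace E] (X Y : Set E)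
    (hX : IsCompact X) (hXn : X.Nonempty) (hY : IsCompact Y) (hYn : Y.Nonempty) : ℝ :=
  haveI := hXn.to_subtype
  haveI := hYn.to_subtype
  haveI := isCompact_iff_compactSpace.mp hX
  haveI := isCompact_iff_compactSpace.mp hY
  GromovHausdorff.ghDist X Y

/-- `d_{H,iso}`: infimum over isometries `t ↦ ±t + c` of `ℝ` of the Hausdorff distance. -/
noncomputable def dHiso (X Y : Set ℝ) : ℝ :=
  sInf {r | ∃ ε c : ℝ, (ε = 1 ∨ ε = -1) ∧
    r = Metric.hausdorffDist X ((fun t => ε * t + c) '' Y)}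

open Metric Set

/-- `R` is a correspondence between `X` and `Y` of distortion at most `r`. -/
structure IsCorrespondence {α β : Type*} [PseudoMetricSpace α] [PseudoMetricSpace β]
    (X : Set α) (Y : Set β) (R : Set (α × β)) (r : ℝ) : Prop where
  subset : R ⊆ X ×ˢ Y
  exists_snd : ∀ x ∈ X, ∃ y, (x, y) ∈ R
  exists_fst : ∀ y ∈ Y, ∃ x, (x, y) ∈ R
  distortion_le : ∀ ⦃z⦄, z ∈ R → ∀ ⦃w⦄, w ∈ R → |dist z.1 w.1 - dist z.2 w.2| ≤ r

namespace IsCorrespondence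

variable {α β γ δ : Type*} [PseudoMetricSpace α] [PseudoMetricSpace β] [PseudoMetricSpace γ]
  [PseudoMetricSpace δ] {X : Set α} {Y : Set β} {R : Set (α × β)} {r : ℝ}

theorem swap (hR : IsCorrespondence X Y R r) : IsCorrespondence Y X (Prod.swap '' R) r where
  subset := by
    rintro _ ⟨z, hz, rfl⟩
    exact (hR.subset hz).symm
  exists_snd y hy := (hR.exists_fst y hy).imp fun x hxy => ⟨(x, y), hxy, rfl⟩
  exists_fst x hx := (hR.exists_snd x hx).imp fun y hxy => ⟨(x, y), hxy, rfl⟩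
  distortion_le := by
    rintro _ ⟨z, hz, rfl⟩ _ ⟨w, hw, rfl⟩
    rw [abs_sub_comm]
    exact hR.distortion_le hz hw

theorem image (hR : IsCorrespondence X Y R r) {f : α → γ} {g : β → δ} (hf : Isometry f)
    (hg : Isometry g) : IsCorrespondence (f '' X) (g '' Y) (Prod.map f g '' R) r where
  subset := by
    rintro _ ⟨z, hz, rfl⟩
    exact ⟨mem_image_of_mem f (hR.subset hz).1, mem_image_of_mem g (hR.subset hz).2⟩
  exists_snd := by
    rintro _ ⟨x, hx, rfl⟩
    obtain ⟨y, hxy⟩ := hR.exists_snd x hx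
    exact ⟨g y, (x, y), hxy, rfl⟩
  exists_fst := by
    rintro _ ⟨y, hy, rfl⟩
    obtain ⟨x, hxy⟩ := hR.exists_fst y hy
    exact ⟨f x, (x, y), hxy, rfl⟩
  distortion_le := by
    rintro _ ⟨z, hz, rfl⟩ _ ⟨w, hw, rfl⟩
    simpa only [Prod.map_fst, Prod.map_snd, hf.dist_eq, hg.dist_eq] using hR.distortion_le hz hw

end IsCorrespondence

theorem isCorrespondence_of_hausdorffDist_lt {α β γ : Type*} [PseudoMetricSpace α]
    [PseudoMetricSpace β] [PseudoMetricSpace γ] {Φ : α → γ} {Ψ : β → γ} (hΦ : Isometry Φ)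
    (hΨ : Isometry Ψ) {X : Set α} {Y : Set β} {r : ℝ}
    (h : hausdorffDist (Φ '' X) (Ψ '' Y) < r) (hfin : hausdorffEDist (Φ '' X) (Ψ '' Y) ≠ ⊤) :
    IsCorrespondence X Y {z | z.1 ∈ X ∧ z.2 ∈ Y ∧ dist (Φ z.1) (Ψ z.2) < r} (2 * r) where
  subset _ hz := ⟨hz.1, hz.2.1⟩
  exists_snd x hx := by
    obtain ⟨_, ⟨y, hy, rfl⟩, hxy⟩ :=
      exists_dist_lt_of_hausdorffDist_lt (mem_image_of_mem Φ hx) h hfin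
    exact ⟨y, hx, hy, hxy⟩
  exists_fst y hy := by
    obtain ⟨_, ⟨x, hx, rfl⟩, hxy⟩ :=
      exists_dist_lt_of_hausdorffDist_lt' (mem_image_of_mem Ψ hy) h hfin
    exact ⟨x, hx, hy, hxy⟩
  distortion_le z hz w hw := by
    have := dist_dist_dist_le (Φ z.1) (Φ w.1) (Ψ z.2) (Ψ w.2)
    rw [hΦ.dist_eq, hΨ.dist_eq, Real.dist_eq] at this
    linarith [hz.2.2, hw.2.2]

theorem exists_isCorrespondence_of_ghDist_lt {α β : Type*} [MetricSpace α] [CompactSpace α]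
    [Nonempty α] [MetricSpace β] [CompactSpace β] [Nonempty β] {r : ℝ}
    (h : GromovHausdorff.ghDist α β < r) :
    ∃ R : Set (α × β), IsCorrespondence univ univ R (2 * r) := by
  have hΦ := GromovHausdorff.isometry_optimalGHInjl α β
  have hΨ := GromovHausdorff.isometry_optimalGHInjr α β
  refine ⟨_, isCorrespondence_of_hausdorffDist_lt hΦ hΨ ?_ ?_⟩ <;> rw [image_univ, image_univ]
  · rwa [GromovHausdorff.hausdorffDist_optimal]
  · exact hausdorffEDist_ne_top_of_nonempty_of_bounded (range_nonempty _) (range_nonempty _)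
      (isCompact_range hΦ.continuous).isBounded (isCompact_range hΨ.continuous).isBounded

theorem exists_isCorrespondence_of_ghDistSet_lt {E : Type*} [MetricSpace E] {X Y : Set E}
    (hX : IsCompact X) (hXn : X.Nonempty) (hY : IsCompact Y) (hYn : Y.Nonempty) {r : ℝ}
    (h : ghDistSet X Y hX hXn hY hYn < r) : ∃ R, IsCorrespondence X Y R (2 * r) := by
  have := hXn.to_subtype
  have := hYn.to_subtype
  have := isCompact_iff_compactSpace.mp hX
  have := isCompact_iff_compactSpace.mp hY
  obtain ⟨R, hR⟩ := exists_isCorrespondence_of_ghDist_lt h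
  exact ⟨Prod.map (↑) (↑) '' R, by
    simpa only [image_univ, Subtype.range_coe] using
      hR.image isometry_subtype_coe isometry_subtype_coe⟩

theorem abs_sub_clamp_add_le {a b p q x y r : ℝ} (hax : a ≤ x) (hxb : x ≤ b) (hpq : p ≤ q)
    (hab : |(|b - a| - |q - p|)| ≤ r) (ha : |(|x - a| - |y - p|)| ≤ r)
    (hb : |(|x - b| - |y - q|)| ≤ r) :
    |x - (max p (min y q) + ((a - p) + (b - q)) / 2)| ≤ r := by
  rw [abs_of_nonneg (by linarith : 0 ≤ b - a), abs_of_nonneg (by linarith : 0 ≤ q - p),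
    abs_le] at hab
  rw [abs_of_nonneg (by linarith : 0 ≤ x - a), abs_le] at ha
  rw [abs_of_nonpos (by linarith : x - b ≤ 0), abs_le] at hb
  rw [abs_le]
  rcases le_total y p with hyp | hpy
  · rw [max_eq_left (min_le_of_left_le hyp)]
    rw [abs_of_nonpos (by linarith : y - p ≤ 0)] at ha
    rw [abs_of_nonpos (by linarith : y - q ≤ 0)] at hb
    constructor <;> linarith
  rcases le_total y q with hyq | hqy
  · rw [min_eq_left hyq, max_eq_right hpy]
    rw [abs_of_nonneg (by linarith : 0 ≤ y - p)] at ha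
    rw [abs_of_nonpos (by linarith : y - q ≤ 0)] at hb
    constructor <;> linarith
  · rw [min_eq_right hqy, max_eq_right hpq]
    rw [abs_of_nonneg (by linarith : 0 ≤ y - p)] at ha
    rw [abs_of_nonneg (by linarith : 0 ≤ y - q)] at hb
    constructor <;> linarith

theorem hausdorffDist_image_add_le {X Y : Set ℝ} {R : Set (ℝ × ℝ)} {r a b p q : ℝ}
    (hR : IsCorrespondence X Y R r) (hX : X ⊆ Icc a b) (hY : ∀ y ∈ Y, ∀ y' ∈ Y, dist y y' ≤ b - a)
    (hap : (a, p) ∈ R) (hbq : (b, q) ∈ R) (hpq : p ≤ q) :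
    hausdorffDist X ((· + ((a - p) + (b - q)) / 2) '' Y) ≤ r := by
  set c := ((a - p) + (b - q)) / 2 with hc
  obtain ⟨haX, hpY⟩ : a ∈ X ∧ p ∈ Y := hR.subset hap
  obtain ⟨hbX, hqY⟩ : b ∈ X ∧ q ∈ Y := hR.subset hbq
  have hab := hR.distortion_le hbq hap
  simp only [Real.dist_eq] at hab
  have hpartner : ∀ x y, (x, y) ∈ R → |x - (max p (min y q) + c)| ≤ r := fun x y hxy => by
    have hx := hX (hR.subset hxy).1
    have ha := hR.distortion_le hxy hap
    have hb := hR.distortion_le hxy hbq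
    simp only [Real.dist_eq] at ha hb
    exact abs_sub_clamp_add_le hx.1 hx.2 hpq hab ha hb
  have hδ : (b - a) - (q - p) ≤ r := by
    rw [abs_of_nonneg (sub_nonneg.2 (hX haX).2), abs_of_nonneg (sub_nonneg.2 hpq)] at hab
    exact (abs_le.mp hab).2
  apply hausdorffDist_le_of_mem_dist ((abs_nonneg _).trans (hR.distortion_le hap hap))
  · intro x hx
    obtain ⟨y, hxy⟩ := hR.exists_snd x hx
    have hy := (hR.subset hxy).2
    have hclamp : max p (min y q) ∈ Y := by
      rcases max_choice p (min y q) with h | h <;> rw [h]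
      · exact hpY
      · rcases min_choice y q with h' | h' <;> rwa [h']
    exact ⟨_, mem_image_of_mem _ hclamp, by rw [Real.dist_eq]; exact hpartner x y hxy⟩
  · rintro _ ⟨y, hy, rfl⟩
    rcases lt_or_ge y p with hyp | hpy
    · have hqy := hY q hqY y hy
      rw [Real.dist_eq, abs_of_nonneg (by linarith)] at hqy
      refine ⟨a, haX, ?_⟩
      simp only [Real.dist_eq, abs_le]
      constructor <;> linarith
    rcases le_or_gt y q with hyq | hqy
    · obtain ⟨x, hxy⟩ := hR.exists_fst y hy
      refine ⟨x, (hR.subset hxy).1, ?_⟩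
      rw [dist_comm, Real.dist_eq]
      simpa only [min_eq_left hyq, max_eq_right hpy] using hpartner x y hxy
    · have hyp := hY y hy p hpY
      rw [Real.dist_eq, abs_of_nonneg (by linarith)] at hyp
      refine ⟨b, hbX, ?_⟩
      simp only [Real.dist_eq, abs_le]
      constructor <;> linarith

theorem hausdorffDist_image_affine_comm {ε : ℝ} (hε : ε = 1 ∨ ε = -1) (c : ℝ) (X Y : Set ℝ) :
    hausdorffDist Y ((fun t => ε * t + c) '' X) =
      hausdorffDist X ((fun t => ε * t + -(ε * c)) '' Y) := by
  have habs : |ε| = 1 := by rcases hε with rfl | rfl <;> norm_num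
  have hεε : ε * ε = 1 := by rcases hε with rfl | rfl <;> norm_num
  have hT : Isometry fun t : ℝ => ε * t + c := Isometry.of_dist_eq fun x y => by
    rw [Real.dist_eq, Real.dist_eq, add_sub_add_right_eq_sub, ← mul_sub, abs_mul, habs, one_mul]
  rw [hausdorffDist_comm, ← hausdorffDist_image hT (t := (fun t => ε * t + -(ε * c)) '' Y),
    image_image]
  congr 1
  convert (image_id' Y).symm using 2 with t
  linear_combination (t - c) * hεε

theorem exists_hausdorffDist_image_le {X Y : Set ℝ} {R : Set (ℝ × ℝ)} {r : ℝ}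
    (hX : IsCompact X) (hXn : X.Nonempty) (hY : IsCompact Y) (hYn : Y.Nonempty)
    (hR : IsCorrespondence X Y R r) :
    ∃ ε c : ℝ, (ε = 1 ∨ ε = -1) ∧ hausdorffDist X ((fun t => ε * t + c) '' Y) ≤ r := by
  wlog hd : diam Y ≤ diam X generalizing X Y R
  · obtain ⟨ε, c, hε, h⟩ := this hY hYn hX hXn hR.swap (le_of_not_ge hd)
    exact ⟨ε, -(ε * c), hε, hausdorffDist_image_affine_comm hε c X Y ▸ h⟩
  obtain ⟨p, hap⟩ := hR.exists_snd _ (hX.sInf_mem hXn)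
  obtain ⟨q, hbq⟩ := hR.exists_snd _ (hX.sSup_mem hXn)
  wlog hpq : p ≤ q generalizing Y R p q
  · have hR' : IsCorrespondence X (Neg.neg '' Y) (Prod.map id Neg.neg '' R) r := by
      simpa only [image_id] using hR.image isometry_id isometry_neg
    obtain ⟨ε, c, hε, h⟩ := this (hY.image continuous_neg) (hYn.image _) hR'
      (by rwa [isometry_neg.diam_image]) (-p) ⟨_, hap, rfl⟩ (-q) ⟨_, hbq, rfl⟩ (by linarith)
    refine ⟨-ε, c, by rcases hε with rfl | rfl <;> norm_num, ?_⟩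
    simpa only [image_image, mul_neg, neg_mul] using h
  have hXab : X ⊆ Icc (sInf X) (sSup X) := fun x hx =>
    ⟨csInf_le hX.bddBelow hx, le_csSup hX.bddAbove hx⟩
  have hdiamX : diam X ≤ sSup X - sInf X := by
    rw [← Real.diam_Icc (hXab (hX.sInf_mem hXn)).2]
    exact diam_mono hXab (isBounded_Icc _ _)
  refine ⟨1, ((sInf X - p) + (sSup X - q)) / 2, Or.inl rfl, ?_⟩
  simpa only [one_mul] using hausdorffDist_image_add_le hR hXab
    (fun y hy y' hy' => (dist_le_diam_of_mem hY.isBounded hy hy').trans (hd.trans hdiamX))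
    hap hbq hpq

theorem dHiso_le_of_hausdorffDist_le {X Y : Set ℝ} {ε c r : ℝ} (hε : ε = 1 ∨ ε = -1)
    (h : hausdorffDist X ((fun t => ε * t + c) '' Y) ≤ r) : dHiso X Y ≤ r := by
  refine le_trans (csInf_le ?_ ⟨ε, c, hε, rfl⟩) h
  refine ⟨0, ?_⟩
  rintro _ ⟨-, -, -, rfl⟩
  exact hausdorffDist_nonneg

theorem dHiso_le_two_ghDist (X Y : Set ℝ)
    (hX : IsCompact X) (hXn : X.Nonempty) (hY : IsCompact Y) (hYn : Y.Nonempty) :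
    dHiso X Y ≤ 2 * ghDistSet X Y hX hXn hY hYn := by
  refine le_of_forall_gt_imp_ge_of_dense fun s hs => ?_
  obtain ⟨R, hR⟩ := exists_isCorrespondence_of_ghDistSet_lt hX hXn hY hYn
    (show ghDistSet X Y hX hXn hY hYn < s / 2 by linarith)
  rw [mul_div_cancel₀ s two_ne_zero] at hR
  obtain ⟨ε, c, hε, h⟩ := exists_hausdorffDist_image_le hX hXn hY hYn hR
  exact dHiso_le_of_hausdorffDist_le hε h
end

section
/- Let C be a correspondence between compact X, Y ⊆ ℝ with distortion D ≥ 0, and suppose (x',y'), (x,y) ∈ C are in standard configuration: x' ≤ x, x' − y' = y − x = D/2. If (p,q) ∈ C satisfies p > x and q < y' (a double crossing), then setting h = x − x', ε1 = p − x, ε2 = y' − q, we have ε1 − ε2 ≥ h. -/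
lemma sub_le_sub_add_of_abs_abs_sub_le {p q x y D : ℝ} (h : |(|p - x| - |q - y|)| ≤ D)
    (hxp : x ≤ p) : y - q ≤ p - x + D :=
  calc y - q ≤ |q - y| := by rw [abs_sub_comm]; exact le_abs_self _
    _ ≤ |p - x| + D := by linarith [(abs_le.mp h).1]
    _ = p - x + D := by rw [abs_of_nonneg (sub_nonneg.mpr hxp)]

theorem double_crossing_eps_sub_ge_general (C : Set (ℝ × ℝ)) (D : ℝ)
    (hdist : ∀ p ∈ C, ∀ q ∈ C, abs (|p.1 - q.1| - |p.2 - q.2|) ≤ D)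
    (x' y' x y : ℝ) (hxy : (x, y) ∈ C)
    (hstd1 : x' - y' = D / 2) (hstd2 : y - x = D / 2)
    (p q : ℝ) (hpq : (p, q) ∈ C) (hp : p > x) :
    (p - x) - (y' - q) ≥ x - x' := by
  have hyq : y - q ≤ p - x + D := sub_le_sub_add_of_abs_abs_sub_le (hdist _ hpq _ hxy) hp.le
  -- substituting `y = x + D/2` and `y' = x' - D/2` turns `hyq` into the claim
  linarith

theorem double_crossing_eps_sub_ge (X Y : Set ℝ) (C : Set (ℝ × ℝ)) (D : ℝ) (hD0 : 0 ≤ D)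
    (hX : IsCompact X) (hY : IsCompact Y) (hC : IsCorrOn X Y C)
    (hdist : ∀ p ∈ C, ∀ q ∈ C, abs (|p.1 - q.1| - |p.2 - q.2|) ≤ D)
    (x' y' x y : ℝ) (hx'y' : (x', y') ∈ C) (hxy : (x, y) ∈ C)
    (hxx : x' ≤ x) (hstd1 : x' - y' = D / 2) (hstd2 : y - x = D / 2)
    (p q : ℝ) (hpq : (p, q) ∈ C) (hp : p > x) (hq : q < y') :
    (p - x) - (y' - q) ≥ x - x' :=
  double_crossing_eps_sub_ge_general C D hdist x' y' x y hxy hstd1 hstd2 p q hpq hp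
end

section
/- Let C be a correspondence between compact X, Y ⊆ ℝ with distortion D ≥ 0, and suppose (x',y'), (x,y) ∈ C satisfy x' ≤ x and x' − y' = y − x = D/2. If there exists (p,q) ∈ C with p > x and q < y' (a double crossing), then h = x − x' satisfies h ≤ D/2. -/
/-!
Since `q < y'` and `p > x`, the pair `(p, q)` lies on opposite sides of `(x', y')` and of
`(x, y)` in the two coordinates. The distortion bound against `(x', y')` gives
`p - x' ≤ (y' - q) + D`, the one against `(x, y)` gives `y - q ≤ (p - x) + D`; adding them
and using `y - y' = (x - x') + D` yields `2 (x - x') ≤ D`.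
-/

section Distortion

variable {C : Set (ℝ × ℝ)} {D : ℝ}
  (hdist : ∀ p ∈ C, ∀ q ∈ C, |(|p.1 - q.1| - |p.2 - q.2|)| ≤ D)
include hdist

theorem abs_fst_sub_le_abs_snd_sub_add {P Q : ℝ × ℝ} (hP : P ∈ C) (hQ : Q ∈ C) :
    |P.1 - Q.1| ≤ |P.2 - Q.2| + D := by
  linarith [(abs_le.mp (hdist P hP Q hQ)).2]

theorem abs_snd_sub_le_abs_fst_sub_add {P Q : ℝ × ℝ} (hP : P ∈ C) (hQ : Q ∈ C) :
    |P.2 - Q.2| ≤ |P.1 - Q.1| + D := by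
  linarith [(abs_le.mp (hdist P hP Q hQ)).1]

end Distortion

theorem double_crossing_h_le_general (C : Set (ℝ × ℝ)) (D : ℝ)
    (hdist : ∀ p ∈ C, ∀ q ∈ C, abs (|p.1 - q.1| - |p.2 - q.2|) ≤ D)
    (x' y' x y : ℝ) (hx'y' : (x', y') ∈ C) (hxy : (x, y) ∈ C)
    (hstd1 : x' - y' = D / 2) (hstd2 : y - x = D / 2)
    (p q : ℝ) (hpq : (p, q) ∈ C) (hp : p > x) (hq : q < y') :
    x - x' ≤ D / 2 := by
  have hfst : p - x' ≤ y' - q + D :=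
    calc p - x' ≤ |p - x'| := le_abs_self _
      _ ≤ |q - y'| + D := abs_fst_sub_le_abs_snd_sub_add hdist hpq hx'y'
      _ = y' - q + D := by rw [abs_sub_comm, abs_of_pos (sub_pos.mpr hq)]
  have hsnd : y - q ≤ p - x + D :=
    calc y - q ≤ |q - y| := by rw [abs_sub_comm]; exact le_abs_self _
      _ ≤ |p - x| + D := abs_snd_sub_le_abs_fst_sub_add hdist hpq hxy
      _ = p - x + D := by rw [abs_of_pos (sub_pos.mpr hp)]
  linarith

theorem double_crossing_h_le (X Y : Set ℝ) (C : Set (ℝ × ℝ)) (D : ℝ) (hD0 : 0 ≤ D)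
    (hX : IsCompact X) (hY : IsCompact Y) (hC : IsCorrOn X Y C)
    (hdist : ∀ p ∈ C, ∀ q ∈ C, abs (|p.1 - q.1| - |p.2 - q.2|) ≤ D)
    (x' y' x y : ℝ) (hx'y' : (x', y') ∈ C) (hxy : (x, y) ∈ C)
    (hxx : x' ≤ x) (hstd1 : x' - y' = D / 2) (hstd2 : y - x = D / 2)
    (p q : ℝ) (hpq : (p, q) ∈ C) (hp : p > x) (hq : q < y') :
    x - x' ≤ D / 2 :=
  double_crossing_h_le_general C D hdist x' y' x y hx'y' hxy hstd1 hstd2 p q hpq hp hq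
end

section
/- Let C be a correspondence between compact X, Y ⊆ ℝ with distortion D ≥ 0, with (x',y'), (x,y) ∈ C satisfying x' ≤ x and x' − y' = y − x = D/2, and a double crossing (p,q) ∈ C (p > x, q < y'). Let q̃ = (x + x') − q be the reflection of q about the midpoint of x and x'. Then |p − q̃| ≤ D/2 − (x − x'). -/
def DistortionLE (C : Set (ℝ × ℝ)) (D : ℝ) : Prop :=
  ∀ p ∈ C, ∀ q ∈ C, |(|p.1 - q.1| - |p.2 - q.2|)| ≤ D

namespace DistortionLE

variable {C : Set (ℝ × ℝ)} {D p q u v : ℝ}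

theorem add_le (h : DistortionLE C D) (hpq : (p, q) ∈ C) (huv : (u, v) ∈ C) (hqv : q ≤ v) :
    p + q ≤ u + v + D := by
  have hdist := (abs_le.mp (h _ hpq _ huv)).2
  rw [abs_of_nonpos (sub_nonpos.mpr hqv)] at hdist
  linarith [le_abs_self (p - u)]

theorem le_add (h : DistortionLE C D) (hpq : (p, q) ∈ C) (huv : (u, v) ∈ C) (hup : u ≤ p) :
    u + v ≤ p + q + D := by
  have hdist := (abs_le.mp (h _ hpq _ huv)).1
  rw [abs_of_nonneg (sub_nonneg.mpr hup)] at hdist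
  linarith [neg_abs_le (q - v)]

end DistortionLE

theorem double_crossing_reflect_close_general (C : Set (ℝ × ℝ)) (D : ℝ)
    (hdist : ∀ p ∈ C, ∀ q ∈ C, abs (|p.1 - q.1| - |p.2 - q.2|) ≤ D)
    (x' y' x y : ℝ) (hx'y' : (x', y') ∈ C) (hxy : (x, y) ∈ C)
    (hstd1 : x' - y' = D / 2) (hstd2 : y - x = D / 2)
    (p q : ℝ) (hpq : (p, q) ∈ C) (hp : p > x) (hq : q < y') :
    |p - ((x + x') - q)| ≤ D / 2 - (x - x') := by
  have hC : DistortionLE C D := hdist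
  have upper := hC.add_le hpq hx'y' hq.le
  have lower := hC.le_add hpq hxy hp.le
  rw [abs_le]
  constructor <;> linarith

theorem double_crossing_reflect_close (X Y : Set ℝ) (C : Set (ℝ × ℝ)) (D : ℝ) (hD0 : 0 ≤ D)
    (hX : IsCompact X) (hY : IsCompact Y) (hC : IsCorrOn X Y C)
    (hdist : ∀ p ∈ C, ∀ q ∈ C, abs (|p.1 - q.1| - |p.2 - q.2|) ≤ D)
    (x' y' x y : ℝ) (hx'y' : (x', y') ∈ C) (hxy : (x, y) ∈ C)
    (hxx : x' ≤ x) (hstd1 : x' - y' = D / 2) (hstd2 : y - x = D / 2)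
    (p q : ℝ) (hpq : (p, q) ∈ C) (hp : p > x) (hq : q < y') :
    |p - ((x + x') - q)| ≤ D / 2 - (x - x') :=
  double_crossing_reflect_close_general C D hdist x' y' x y hx'y' hxy hstd1 hstd2 p q hpq hp hq
end

section
/- Let C be a correspondence between compact X, Y ⊆ ℝ with distortion D ≥ 0, with (x',y'), (x,y) ∈ C in standard configuration (x' ≤ x, x' − y' = y − x = D/2), a wide crossing (p,q) ∈ C with p < x' − D or p > x + D and p,q crossing both designated edges, and an edge (p0,q0) ∈ C with p0 > x + D and y' < q0 < y. Then y − q0 ≥ x − x'. -/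
namespace DistortionLE

variable {C : Set (ℝ × ℝ)} {D a b c d : ℝ}

theorem sub_le_of_monotone (h : DistortionLE C D) (hab : (a, b) ∈ C) (hcd : (c, d) ∈ C)
    (hac : a ≤ c) (hbd : b ≤ d) : c - a ≤ d - b + D ∧ d - b ≤ c - a + D := by
  have hdist := abs_le.1 (h _ hcd _ hab)
  rw [abs_of_nonneg (sub_nonneg.2 hac), abs_of_nonneg (sub_nonneg.2 hbd)] at hdist
  constructor <;> linarith [hdist.1, hdist.2]

theorem sub_le_of_antitone (h : DistortionLE C D) (hab : (a, b) ∈ C) (hcd : (c, d) ∈ C)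
    (hac : a ≤ c) (hdb : d ≤ b) : c - a ≤ b - d + D ∧ b - d ≤ c - a + D := by
  have hdist := abs_le.1 (h _ hcd _ hab)
  rw [abs_of_nonneg (sub_nonneg.2 hac), abs_sub_comm, abs_of_nonneg (sub_nonneg.2 hdb)] at hdist
  constructor <;> linarith [hdist.1, hdist.2]

variable {x' y' x y p q p0 q0 : ℝ}

theorem wide_crossing_left (h : DistortionLE C D) (hx'y' : (x', y') ∈ C)
    (hpq : (p, q) ∈ C) (hp0q0 : (p0, q0) ∈ C) (hxx : x' ≤ x) (hstd1 : x' - y' = D / 2)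
    (hstd2 : y - x = D / 2) (hp : p ≤ x') (hq : y' ≤ q) (hq0 : q0 ≤ q) (hpp0 : p ≤ p0)
    (hp0 : x + D < p0) : x - x' ≤ y - q0 := by
  have h₁ := (h.sub_le_of_antitone hpq hx'y' hp hq).2
  have h₂ := (h.sub_le_of_antitone hpq hp0q0 hpp0 hq0).1
  linarith

theorem wide_crossing_right (h : DistortionLE C D) (hx'y' : (x', y') ∈ C)
    (hxy : (x, y) ∈ C) (hpq : (p, q) ∈ C) (hp0q0 : (p0, q0) ∈ C) (hxx : x' ≤ x)
    (hstd1 : x' - y' = D / 2) (hstd2 : y - x = D / 2) (hx'p : x' ≤ p) (hp : x + D < p)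
    (hq : q ≤ y') (hq0 : q ≤ q0) (hq0y : q0 ≤ y) (hp0 : x + D < p0) :
    x - x' ≤ y - q0 := by
  have h₁ := (h.sub_le_of_antitone hx'y' hpq hx'p hq).1
  rcases le_or_gt p0 p with hp0p | hpp0
  · have h₂ := (h.sub_le_of_antitone hp0q0 hpq hp0p hq0).2
    linarith
  · have h₂ := (h.sub_le_of_monotone hpq hp0q0 hpp0.le hq0).2
    have h₃ := (h.sub_le_of_antitone hxy hp0q0 (by linarith) hq0y).1
    linarith

end DistortionLE

theorem wide_crossing_lemma_general (C : Set (ℝ × ℝ)) (D : ℝ) (hD0 : 0 ≤ D)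
    (hdist : ∀ p ∈ C, ∀ q ∈ C, abs (|p.1 - q.1| - |p.2 - q.2|) ≤ D)
    (x' y' x y : ℝ) (hx'y' : (x', y') ∈ C) (hxy : (x, y) ∈ C)
    (hxx : x' ≤ x) (hstd1 : x' - y' = D / 2) (hstd2 : y - x = D / 2)
    -- a wide crossing edge (p, q): crosses both designated edges, with p outside (x'-D, x+D)
    (p q : ℝ) (hpq : (p, q) ∈ C)
    (hcross1 : (p - x') * (q - y') < 0) (hcross2 : (p - x) * (q - y) < 0)
    (hwide : p < x' - D ∨ p > x + D)
    -- an edge (p0, q0) with p0 > x + D and y' < q0 < y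
    (p0 q0 : ℝ) (hp0q0 : (p0, q0) ∈ C) (hp0 : p0 > x + D) (hq0 : y' < q0 ∧ q0 < y) :
    y - q0 ≥ x - x' := by
  obtain ⟨hy'q0, hq0y⟩ := hq0
  rcases hwide with hp | hp
  · have hqy' := (neg_iff_pos_of_mul_neg hcross1).1 (by linarith)
    have hqy := (neg_iff_pos_of_mul_neg hcross2).1 (by linarith)
    exact DistortionLE.wide_crossing_left hdist hx'y' hpq hp0q0 hxx hstd1 hstd2
      (by linarith) (by linarith) (by linarith) (by linarith) hp0
  · have hqy' := (pos_iff_neg_of_mul_neg hcross1).1 (by linarith)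
    exact DistortionLE.wide_crossing_right hdist hx'y' hxy hpq hp0q0 hxx hstd1 hstd2
      (by linarith) hp (by linarith) (by linarith) hq0y.le hp0

theorem wide_crossing_lemma (X Y : Set ℝ) (C : Set (ℝ × ℝ)) (D : ℝ) (hD0 : 0 ≤ D)
    (hX : IsCompact X) (hY : IsCompact Y) (hC : IsCorrOn X Y C)
    (hdist : ∀ p ∈ C, ∀ q ∈ C, abs (|p.1 - q.1| - |p.2 - q.2|) ≤ D)
    (x' y' x y : ℝ) (hx'y' : (x', y') ∈ C) (hxy : (x, y) ∈ C)
    (hxx : x' ≤ x) (hstd1 : x' - y' = D / 2) (hstd2 : y - x = D / 2)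
    -- a wide crossing edge (p, q): crosses both designated edges, with p outside (x'-D, x+D)
    (p q : ℝ) (hpq : (p, q) ∈ C)
    (hcross1 : (p - x') * (q - y') < 0) (hcross2 : (p - x) * (q - y) < 0)
    (hwide : p < x' - D ∨ p > x + D)
    -- an edge (p0, q0) with p0 > x + D and y' < q0 < y
    (p0 q0 : ℝ) (hp0q0 : (p0, q0) ∈ C) (hp0 : p0 > x + D) (hq0 : y' < q0 ∧ q0 < y) :
    y - q0 ≥ x - x' :=
  wide_crossing_lemma_general C D hD0 hdist x' y' x y hx'y' hxy hxx hstd1 hstd2 p q hpq hcross1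
    hcross2 hwide p0 q0 hp0q0 hp0 hq0
end

section
/- Let C be a correspondence between compact X, Y ⊆ ℝ with distortion D, in standard configuration with designated edges (x',y'), (x,y) (x' ≤ x, x' − y' = y − x = D/2). Suppose p0 ∈ X with p0 > x + D, and (p0, q0) ∈ C with y' ≤ q0 ≤ y. Set ε = p0 − x − D and ε' = y − q0. Then ε ≤ ε', ε + ε' ≤ D, and hence ε ≤ D/2. -/
theorem fst_sub_le_abs_snd_sub_add {C : Set (ℝ × ℝ)} {D : ℝ}
    (hdist : ∀ p ∈ C, ∀ q ∈ C, |(|p.1 - q.1| - |p.2 - q.2|)| ≤ D)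
    {p q : ℝ × ℝ} (hp : p ∈ C) (hq : q ∈ C) :
    p.1 - q.1 ≤ |p.2 - q.2| + D := by
  have := (abs_le.1 (hdist p hp q hq)).2
  linarith [le_abs_self (p.1 - q.1)]

theorem eps_bounds_general (C : Set (ℝ × ℝ)) (D : ℝ)
    (hdist : ∀ p ∈ C, ∀ q ∈ C, abs (|p.1 - q.1| - |p.2 - q.2|) ≤ D)
    (x' y' x y : ℝ) (hx'y' : (x', y') ∈ C) (hxy : (x, y) ∈ C)
    (hstd1 : x' - y' = D / 2) (hstd2 : y - x = D / 2)
    (p0 q0 : ℝ)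
    (hp0q0 : (p0, q0) ∈ C) (hq0 : y' ≤ q0 ∧ q0 ≤ y) :
    p0 - x - D ≤ y - q0 ∧ (p0 - x - D) + (y - q0) ≤ D ∧ p0 - x - D ≤ D / 2 := by
  have hright := fst_sub_le_abs_snd_sub_add hdist hp0q0 hxy
  have hleft := fst_sub_le_abs_snd_sub_add hdist hp0q0 hx'y'
  rw [abs_of_nonpos (sub_nonpos.2 hq0.2)] at hright
  rw [abs_of_nonneg (sub_nonneg.2 hq0.1)] at hleft
  -- `hleft` is `ε + ε' ≤ D`, because the standard configuration gives `y - y' = (x - x') + D`.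
  exact ⟨by linarith, by linarith, by linarith⟩

theorem eps_bounds (X Y : Set ℝ) (C : Set (ℝ × ℝ)) (D : ℝ)
    (hX : IsCompact X) (hY : IsCompact Y) (hC : IsCorrOn X Y C)
    (hdist : ∀ p ∈ C, ∀ q ∈ C, abs (|p.1 - q.1| - |p.2 - q.2|) ≤ D)
    (x' y' x y : ℝ) (hx'y' : (x', y') ∈ C) (hxy : (x, y) ∈ C)
    (hxx : x' ≤ x) (hstd1 : x' - y' = D / 2) (hstd2 : y - x = D / 2)
    (p0 q0 : ℝ) (hp0X : p0 ∈ X) (hp0 : p0 > x + D)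
    (hp0q0 : (p0, q0) ∈ C) (hq0 : y' ≤ q0 ∧ q0 ≤ y) :
    p0 - x - D ≤ y - q0 ∧ (p0 - x - D) + (y - q0) ≤ D ∧ p0 - x - D ≤ D / 2 :=
  eps_bounds_general C D hdist x' y' x y hx'y' hxy hstd1 hstd2 p0 q0 hp0q0 hq0
end

section
/- Let C be a correspondence between compact X, Y ⊆ ℝ with distortion D, in standard configuration with designated edges (x',y'), (x,y) (x' ≤ x, x' − y' = y − x = D/2). For every x0 ∈ X with x' ≤ x0 ≤ x and every q ∈ Y with (x0, q) ∈ C, it holds that y' ≤ q ≤ y and |x0 − q| ≤ D/2. -/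
section Distortion

variable {a a' b b' D : ℝ}

theorem abs_sub_le_abs_sub_add_of_distortion_le (h : |(|a - a'| - |b - b'|)| ≤ D) :
    |b - b'| ≤ |a - a'| + D := by
  linarith [(abs_le.1 h).1]

theorem le_add_of_distortion_le (h : |(|a - a'| - |b - b'|)| ≤ D) (ha : a' ≤ a) :
    b ≤ b' + (a - a') + D := by
  have hb := abs_sub_le_abs_sub_add_of_distortion_le h
  rw [abs_of_nonneg (sub_nonneg.2 ha)] at hb
  linarith [le_abs_self (b - b')]

end Distortion

theorem middle_points_matched_close_general (X : Set ℝ) (C : Set (ℝ × ℝ)) (D : ℝ)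
    (hdist : ∀ p ∈ C, ∀ q ∈ C, abs (|p.1 - q.1| - |p.2 - q.2|) ≤ D)
    (x' y' x y : ℝ) (hx'y' : (x', y') ∈ C) (hxy : (x, y) ∈ C)
    (hstd1 : x' - y' = D / 2) (hstd2 : y - x = D / 2) :
    ∀ x0 ∈ X, x' ≤ x0 → x0 ≤ x → ∀ q : ℝ, (x0, q) ∈ C →
      y' ≤ q ∧ q ≤ y ∧ |x0 - q| ≤ D / 2 := by
  intro x0 _ hx'x0 hx0x q hq
  have hupper : q ≤ x0 + D / 2 := by
    linarith [le_add_of_distortion_le (hdist _ hq _ hx'y') hx'x0]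
  have hlower : x0 - D / 2 ≤ q := by
    linarith [le_add_of_distortion_le (hdist _ hxy _ hq) hx0x]
  exact ⟨by linarith, by linarith, abs_sub_le_iff.2 ⟨by linarith, by linarith⟩⟩

theorem middle_points_matched_close (X Y : Set ℝ) (C : Set (ℝ × ℝ)) (D : ℝ)
    (hX : IsCompact X) (hY : IsCompact Y) (hC : IsCorrOn X Y C)
    (hdist : ∀ p ∈ C, ∀ q ∈ C, abs (|p.1 - q.1| - |p.2 - q.2|) ≤ D)
    (x' y' x y : ℝ) (hx'y' : (x', y') ∈ C) (hxy : (x, y) ∈ C)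
    (hxx : x' ≤ x) (hstd1 : x' - y' = D / 2) (hstd2 : y - x = D / 2) :
    ∀ x0 ∈ X, x' ≤ x0 → x0 ≤ x → ∀ q : ℝ, (x0, q) ∈ C →
      y' ≤ q ∧ q ≤ y ∧ |x0 - q| ≤ D / 2 :=
  middle_points_matched_close_general X C D hdist x' y' x y hx'y' hxy hstd1 hstd2
end
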